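/- arXiv:2112.00378 — 2 statements merged into one kernel-verified Lean document; each statement's English description precedes it below -/
import Mathlib

section
/- Let S be a nonempty compact topological space and let ℓ : ℝ^m × S → ℝ be continuous, such that for every δ ∈ S the map θ ↦ ℓ(θ, δ) is differentiable on ℝ^m and the map (θ, δ) ↦ ∇_θ ℓ(θ, δ) is continuous on ℝ^m × S. Then the max-function φ(θ) = max_{δ ∈ S} ℓ(θ, δ) is locally Lipschitz continuous on ℝ^m. -/
/-! Near any `θ₀`, the gradients `∇_θ ℓ(θ, δ)` are bounded uniformly in `δ` on `closedBall θ₀ 1 × S`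
by compactness, so by the mean value inequality all slices `ℓ(·, δ)` are `K`-Lipschitz on that ball
with one constant `K`. A pointwise supremum of a bounded-above family of `K`-Lipschitz functions is
again `K`-Lipschitz. -/

open Set Metric

theorem LipschitzOnWith.ciSup {α ι : Type*} [PseudoMetricSpace α] [Nonempty ι]
    {f : ι → α → ℝ} {s : Set α} {K : NNReal} (hf : ∀ i, LipschitzOnWith K (f i) s)
    (hbdd : ∀ x ∈ s, BddAbove (range fun i => f i x)) :
    LipschitzOnWith K (fun x => ⨆ i, f i x) s :=
  LipschitzOnWith.of_le_add_mul K fun x hx y hy => ciSup_le fun i =>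
    calc f i x ≤ f i y + K * dist x y := (hf i).le_add_mul hx hy
      _ ≤ (⨆ j, f j y) + K * dist x y := by gcongr; exact le_ciSup (hbdd y hy) i

theorem Convex.exists_lipschitzOnWith_slices_of_continuousOn_fderiv
    {E F S : Type*} [NormedAddCommGroup E] [NormedSpace ℝ E] [NormedAddCommGroup F]
    [NormedSpace ℝ F] [TopologicalSpace S] [CompactSpace S] {f : E × S → F} {s : Set E}
    (hconv : Convex ℝ s) (hs : IsCompact s)
    (hdiff : ∀ δ, ∀ θ ∈ s, DifferentiableAt ℝ (fun θ => f (θ, δ)) θ)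
    (hgrad : ContinuousOn (fun p : E × S => fderiv ℝ (fun θ => f (θ, p.2)) p.1) (s ×ˢ univ)) :
    ∃ K, ∀ δ, LipschitzOnWith K (fun θ => f (θ, δ)) s := by
  obtain ⟨C, hC⟩ := (hs.prod isCompact_univ).exists_bound_of_continuousOn hgrad
  refine ⟨C.toNNReal, fun δ => hconv.lipschitzOnWith_of_nnnorm_fderiv_le (hdiff δ) fun θ hθ => ?_⟩
  simpa using Real.toNNReal_le_toNNReal (hC (θ, δ) ⟨hθ, mem_univ δ⟩)

/-- **Danskin's theorem, local Lipschitz part.**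
Let `S` be a nonempty compact topological space and `ℓ : ℝ^m × S → ℝ` be continuous,
differentiable in its first argument for every `δ ∈ S`, with `(θ, δ) ↦ ∇_θ ℓ(θ, δ)`
continuous.  Then the max-function `φ(θ) = max_{δ ∈ S} ℓ(θ, δ)` is locally Lipschitz. -/
theorem danskin_locallyLipschitz
    {m : ℕ} {S : Type*} [TopologicalSpace S] [CompactSpace S] [Nonempty S]
    (ℓ : EuclideanSpace ℝ (Fin m) × S → ℝ)
    (hcont : Continuous ℓ)
    (hdiff : ∀ δ : S, Differentiable ℝ (fun θ : EuclideanSpace ℝ (Fin m) => ℓ (θ, δ)))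
    (hgradcont : Continuous (fun p : EuclideanSpace ℝ (Fin m) × S =>
      fderiv ℝ (fun θ => ℓ (θ, p.2)) p.1)) :
    LocallyLipschitz (fun θ : EuclideanSpace ℝ (Fin m) => ⨆ δ : S, ℓ (θ, δ)) := by
  intro θ₀
  obtain ⟨K, hK⟩ := (convex_closedBall θ₀ 1).exists_lipschitzOnWith_slices_of_continuousOn_fderiv
    (isCompact_closedBall θ₀ 1) (fun δ θ _ => hdiff δ θ) hgradcont.continuousOn
  have hbdd (θ) : BddAbove (range fun δ => ℓ (θ, δ)) :=
    (isCompact_range (hcont.comp (Continuous.prodMk_right θ))).bddAbove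
  exact ⟨K, closedBall θ₀ 1, closedBall_mem_nhds θ₀ one_pos,
    LipschitzOnWith.ciSup hK fun θ _ => hbdd θ⟩
end

section
/- Let S be a nonempty compact topological space and let ℓ : ℝ^m × S → ℝ be continuous, such that for every δ ∈ S the map θ ↦ ℓ(θ, δ) is differentiable on ℝ^m and the map (θ, δ) ↦ ∇_θ ℓ(θ, δ) is continuous on ℝ^m × S. Let δ*(θ) = {δ ∈ S : ℓ(θ, δ) = max_{δ' ∈ S} ℓ(θ, δ')} denote the (nonempty) set of maximizers. Then for every θ ∈ ℝ^m and every direction h ∈ ℝ^m, the one-sided directional derivative φ'(θ; h) = lim_{t → 0⁺} (φ(θ + t h) − φ(θ)) / t of the max-function φ(θ) = max_{δ ∈ S} ℓ(θ, δ) exists and satisfies φ'(θ; h) = sup_{δ ∈ δ*(θ)} hᵀ ∇_θ ℓ(θ, δ). -/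
/-!
Along the ray `t ↦ θ + t • h` this is a statement about `f t δ = ℓ (θ + t • h, δ)` for real `t`,
with `φ t = ⨆ δ, f t δ`. For a maximizer `δ` at time `0`, `φ t - φ 0 ≥ f t δ - f 0 δ`, which gives
the lower bound `∂ₜ f 0 δ`. Conversely, for a maximizer `δₜ` at time `t > 0`,
`φ t - φ 0 ≤ f t δₜ - f 0 δₜ = t • ∂ₜ f c δₜ` for some `c ∈ (0, t)` by the mean value theorem.
By compactness of `S`, the maximizers `δₜ` eventually lie in any open neighbourhood of the
maximizers at time `0`, and on a thin enough tube around those the continuous derivative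
`∂ₜ f` stays below any number exceeding its supremum over the maximizers at time `0`.
-/

open Filter Topology Set Function

theorem IsMaxOn.iSup_eq_of_univ {S : Type*} {F : S → ℝ} {δ : S} (h : IsMaxOn F univ δ) :
    ⨆ δ', F δ' = F δ :=
  have : Nonempty S := ⟨δ⟩
  ciSup_eq_of_forall_le_of_forall_lt_exists_gt (isMaxOn_univ_iff.1 h) fun _ hw => ⟨δ, hw⟩

section Maximizers

variable {S : Type*} [TopologicalSpace S]

theorem Continuous.eq_ciSup_iff_isMaxOn_univ [CompactSpace S] {F : S → ℝ} (hF : Continuous F)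
    {δ : S} : F δ = ⨆ δ', F δ' ↔ IsMaxOn F univ δ :=
  ⟨fun h => isMaxOn_univ_iff.2 fun δ' => h ▸ le_ciSup (isCompact_range hF).bddAbove δ',
    fun h => h.iSup_eq_of_univ.symm⟩

theorem isClosed_setOf_isMaxOn_univ {F : S → ℝ} (hF : Continuous F) :
    IsClosed {δ | IsMaxOn F univ δ} := by
  simp only [isMaxOn_univ_iff, ofPred_forall]
  exact isClosed_iInter fun δ' => isClosed_le continuous_const hF

/-- Upper hemicontinuity of the set of maximizers of a jointly continuous function. -/
theorem eventually_isMaxOn_univ_mem {X : Type*} [TopologicalSpace X] [CompactSpace S]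
    {F : X → S → ℝ} (hF : Continuous (uncurry F)) {x₀ : X} {V : Set S} (hV : IsOpen V)
    (hmax : {δ | IsMaxOn (F x₀) univ δ} ⊆ V) :
    ∀ᶠ x in 𝓝 x₀, ∀ δ, IsMaxOn (F x) univ δ → δ ∈ V := by
  have hbeaten : ∀ δ ∈ Vᶜ, ∀ᶠ z : X × S in 𝓝 (x₀, δ), ∃ δ', F z.1 z.2 < F z.1 δ' := by
    intro δ hδ
    obtain ⟨δ', hlt⟩ : ∃ δ', F x₀ δ < F x₀ δ' := by
      by_contra! h
      exact hδ (hmax (isMaxOn_univ_iff.2 h))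
    have hδ' : ContinuousAt (fun z : X × S => F z.1 δ') (x₀, δ) :=
      (hF.comp (continuous_fst.prodMk continuous_const)).continuousAt
    exact (hF.continuousAt.eventually_lt hδ' hlt).mono fun z hz => ⟨δ', hz⟩
  filter_upwards [hV.isClosed_compl.isCompact.eventually_forall_of_forall_eventually
    (P := fun x δ => ∃ δ', F x δ < F x δ') hbeaten]
    with x hx δ hδ
  by_contra hδV
  obtain ⟨δ', hlt⟩ := hx δ hδV
  exact (hδ (mem_univ δ')).not_gt hlt

end Maximizers

section RightDerivative

theorem slope_le_slope_of_sub_le_sub {f g : ℝ → ℝ} {x t : ℝ} (hxt : x < t)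
    (h : f t - f x ≤ g t - g x) : slope f x t ≤ slope g x t := by
  simp only [slope_def_field]
  exact div_le_div_of_nonneg_right h (sub_nonneg.2 hxt.le)

theorem eventually_lt_slope_of_hasDerivAt_of_le {φ ψ : ℝ → ℝ} {x d b : ℝ}
    (hψ : HasDerivAt ψ d x) (hle : ∀ t, ψ t ≤ φ t) (heq : ψ x = φ x) (hb : b < d) :
    ∀ᶠ t in 𝓝[>] x, b < slope φ x t := by
  have hslope : Tendsto (slope ψ x) (𝓝[>] x) (𝓝 d) :=
    hψ.tendsto_slope.mono_left (nhdsGT_le_nhdsNE x)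
  filter_upwards [hslope.eventually (lt_mem_nhds hb), self_mem_nhdsWithin] with t hbt hxt
  exact hbt.trans_le (slope_le_slope_of_sub_le_sub hxt (by linarith [hle t]))

variable {S : Type*} [TopologicalSpace S] [CompactSpace S] {f f' : ℝ → S → ℝ}

theorem eventually_slope_iSup_lt [Nonempty S] (hf : Continuous (uncurry f))
    (hf' : Continuous (uncurry f')) (hderiv : ∀ s δ, HasDerivAt (f · δ) (f' s δ) s) {x b : ℝ}
    (hb : ∀ δ, IsMaxOn (f x) univ δ → f' x δ < b) :
    ∀ᶠ t in 𝓝[>] x, slope (fun s => ⨆ δ, f s δ) x t < b := by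
  have hfs : ∀ s, Continuous (f s) := fun s => hf.comp (Continuous.prodMk_right s)
  obtain ⟨u, v, hu, hv, hxu, hmaxv, huv⟩ := generalized_tube_lemma isCompact_singleton
    (isClosed_setOf_isMaxOn_univ (hfs x)).isCompact (isOpen_lt hf' continuous_const)
    (by rintro ⟨_, δ⟩ ⟨rfl, hδ⟩; exact hb δ hδ)
  obtain ⟨r, hxr, hr⟩ := exists_Ico_subset_of_mem_nhds (hu.mem_nhds (hxu rfl)) ⟨x + 1, by simp⟩
  filter_upwards [nhdsWithin_le_nhds (eventually_isMaxOn_univ_mem hf hv hmaxv),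
    Ioo_mem_nhdsGT hxr] with t hmax ⟨hxt, htr⟩
  obtain ⟨δ, -, hδ⟩ := isCompact_univ.exists_isMaxOn univ_nonempty (hfs t).continuousOn
  obtain ⟨c, hc, hc_slope⟩ := exists_hasDerivAt_eq_slope (f · δ) (f' · δ) hxt
    (fun s _ => (hderiv s δ).continuousAt.continuousWithinAt) (fun s _ => hderiv s δ)
  calc slope (fun s => ⨆ δ, f s δ) x t ≤ slope (f · δ) x t := by
        refine slope_le_slope_of_sub_le_sub hxt ?_
        rw [hδ.iSup_eq_of_univ]
        linarith [le_ciSup (isCompact_range (hfs x)).bddAbove δ]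
    _ = f' c δ := by rw [slope_def_field, hc_slope]
    _ < b := huv (show (c, δ) ∈ u ×ˢ v from ⟨hr ⟨hc.1.le, hc.2.trans htr⟩, hmax δ hδ⟩)

theorem hasDerivWithinAt_iSup_Ioi [Nonempty S] (hf : Continuous (uncurry f))
    (hf' : Continuous (uncurry f')) (hderiv : ∀ s δ, HasDerivAt (f · δ) (f' s δ) s) (x : ℝ) :
    HasDerivWithinAt (fun s => ⨆ δ, f s δ) (sSup (f' x '' {δ | IsMaxOn (f x) univ δ}))
      (Ioi x) x := by
  have hfs : ∀ s, Continuous (f s) := fun s => hf.comp (Continuous.prodMk_right s)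
  have hmax_nonempty : {δ | IsMaxOn (f x) univ δ}.Nonempty := by
    obtain ⟨δ, -, hδ⟩ := isCompact_univ.exists_isMaxOn univ_nonempty (hfs x).continuousOn
    exact ⟨δ, hδ⟩
  have hbdd : BddAbove (f' x '' {δ | IsMaxOn (f x) univ δ}) :=
    (isCompact_range (hf'.comp (Continuous.prodMk_right x))).bddAbove.mono (image_subset_range _ _)
  rw [hasDerivWithinAt_iff_tendsto_slope' self_notMem_Ioi, tendsto_order]
  refine ⟨fun b hb => ?_, fun b hb => eventually_slope_iSup_lt hf hf' hderiv fun δ hδ =>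
    (le_csSup hbdd (mem_image_of_mem _ hδ)).trans_lt hb⟩
  obtain ⟨_, ⟨δ, hδ, rfl⟩, hbδ⟩ := exists_lt_of_lt_csSup (hmax_nonempty.image _) hb
  exact eventually_lt_slope_of_hasDerivAt_of_le (hderiv x δ)
    (fun t => le_ciSup (isCompact_range (hfs t)).bddAbove δ) hδ.iSup_eq_of_univ.symm hbδ

end RightDerivative

/-- **Danskin's theorem, directional derivative part.**
Let `S` be a nonempty compact topological space and `ℓ : ℝ^m × S → ℝ` be continuous,
differentiable in its first argument for every `δ ∈ S`, with `(θ, δ) ↦ ∇_θ ℓ(θ, δ)`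
continuous.  Then for every `θ` and every direction `h`, the one-sided directional
derivative of the max-function `φ(θ) = max_{δ ∈ S} ℓ(θ, δ)` exists and equals
`sup_{δ ∈ δ*(θ)} hᵀ ∇_θ ℓ(θ, δ)`, where `δ*(θ)` is the set of maximizers. -/
theorem danskin_directional_derivative
    {m : ℕ} {S : Type*} [TopologicalSpace S] [CompactSpace S] [Nonempty S]
    (ℓ : EuclideanSpace ℝ (Fin m) × S → ℝ)
    (hcont : Continuous ℓ)
    (hdiff : ∀ δ : S, Differentiable ℝ (fun θ : EuclideanSpace ℝ (Fin m) => ℓ (θ, δ)))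
    (hgradcont : Continuous (fun p : EuclideanSpace ℝ (Fin m) × S =>
      fderiv ℝ (fun θ => ℓ (θ, p.2)) p.1))
    (θ h : EuclideanSpace ℝ (Fin m)) :
    Tendsto
      (fun t : ℝ => ((⨆ δ : S, ℓ (θ + t • h, δ)) - ⨆ δ : S, ℓ (θ, δ)) / t)
      (𝓝[>] (0 : ℝ))
      (𝓝 (sSup ((fun δ : S => fderiv ℝ (fun θ' => ℓ (θ', δ)) θ h) ''
        {δ : S | ℓ (θ, δ) = ⨆ δ' : S, ℓ (θ, δ')}))) := by
  have hray : Continuous fun p : ℝ × S => (θ + p.1 • h, p.2) := by fun_prop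
  have hderiv : ∀ s δ, HasDerivAt (fun s : ℝ => ℓ (θ + s • h, δ))
      (fderiv ℝ (fun θ' => ℓ (θ', δ)) (θ + s • h) h) s := fun s δ =>
    (hdiff δ _).hasFDerivAt.comp_hasDerivAt s
      (by simpa using ((hasDerivAt_id s).smul_const h).const_add θ)
  have key := hasDerivWithinAt_iSup_Ioi (f := fun s δ => ℓ (θ + s • h, δ)) (hcont.comp hray)
    ((hgradcont.comp hray).clm_apply continuous_const) hderiv 0
  rw [hasDerivWithinAt_iff_tendsto_slope' self_notMem_Ioi] at key
  have hcont₀ : Continuous fun δ => ℓ (θ, δ) := hcont.comp (Continuous.prodMk_right θ)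
  simp only [zero_smul, add_zero, slope_fun_def_field, sub_zero] at key
  simpa only [hcont₀.eq_ciSup_iff_isMaxOn_univ] using key
end
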